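/- arXiv:1709.10262 — 7 statements merged into one kernel-verified Lean document; each statement's English description precedes it below -/
import Mathlib

section
/- Let u and v be non-constant entire functions such that for all z, w ∈ ℂ, v(z) = v(w) implies u(z) = u(w) (i.e., the fibers of v refine the fibers of u). Then there exists a function h : ℂ → ℂ which is analytic on the range v(ℂ) (an open subset of ℂ, by the open mapping theorem) such that u(z) = h(v(z)) for all z ∈ ℂ. -/
open Filter Topology Set

/-- An entire function locally constant at a point is globally constant. -/
lemma entire_const_of_eventually (f : ℂ → ℂ) (hf : Differentiable ℂ f) (z0 : ℂ)
    (hev : ∀ᶠ z in 𝓝 z0, f z = f z0) : ∀ z, f z = f z0 := by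
  intro z
  have h1 : AnalyticOnNhd ℂ f univ := fun w _ => hf.analyticAt w
  have h2 : AnalyticOnNhd ℂ (fun _ : ℂ => f z0) univ := fun w _ => analyticAt_const
  exact h1.eqOn_of_preconnected_of_eventuallyEq h2 isPreconnected_univ
    (mem_univ z0) hev (mem_univ z)

/-- If `u` and `v` are non-constant entire functions and the fibers of `v`
refine the fibers of `u`, then `u = h ∘ v` for some function `h` analytic on the (open)
range of `v`. -/
theorem fiber_refinement_factorization (u v : ℂ → ℂ)
    (hu : Differentiable ℂ u) (hv : Differentiable ℂ v)
    (hunc : ¬∃ c : ℂ, ∀ z : ℂ, u z = c) (hvnc : ¬∃ c : ℂ, ∀ z : ℂ, v z = c)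
    (hfib : ∀ z w : ℂ, v z = v w → u z = u w) :
    ∃ h : ℂ → ℂ, AnalyticOnNhd ℂ h (Set.range v) ∧ ∀ z : ℂ, u z = h (v z) := by
  classical
  set h : ℂ → ℂ := fun y => if hy : ∃ z, v z = y then u hy.choose else 0 with hh
  have key : ∀ z, h (v z) = u z := by
    intro z
    have hy : ∃ w, v w = v z := ⟨z, rfl⟩
    simp only [hh, dif_pos hy]
    exact hfib _ _ hy.choose_spec
  refine ⟨h, ?_, fun z => (key z).symm⟩
  -- v is not locally constant anywhere:
  have hvopen : ∀ z0 : ℂ, 𝓝 (v z0) ≤ map v (𝓝 z0) := by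
    intro z0
    rcases (hv.analyticAt z0).eventually_constant_or_nhds_le_map_nhds with hev | hle
    · exfalso
      apply hvnc
      refine ⟨v z0, fun z => ?_⟩
      exact entire_const_of_eventually v hv z0 hev z
    · exact hle
  -- Lemma A: h is differentiable at regular values
  have lemA : ∀ z : ℂ, deriv v z ≠ 0 → DifferentiableAt ℂ h (v z) := by
    intro z hz
    obtain ⟨p, hp⟩ := hv.analyticAt z
    have hsd : HasStrictDerivAt v (deriv v z) z := hp.deriv ▸ hp.hasStrictDerivAt
    have hsdF := hsd.hasStrictFDerivAt_equiv hz
    set g : ℂ → ℂ := hsdF.localInverse v _ z with hg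
    have hginv : ∀ᶠ y in 𝓝 (v z), v (g y) = y := hsdF.eventually_right_inverse
    have hgd : DifferentiableAt ℂ g (v z) :=
      hsdF.to_localInverse.differentiableAt
    have heq : (fun y => u (g y)) =ᶠ[𝓝 (v z)] h :=
      hginv.mono fun y hy => show u (g y) = h y by rw [← key (g y), hy]
    exact (Filter.EventuallyEq.differentiableAt_iff heq).mp
      ((hu.differentiableAt).comp _ hgd)
  -- Main: analytic at each point of the range
  rintro y ⟨z0, rfl⟩
  apply Complex.analyticAt_of_differentiable_on_punctured_nhds_of_continuousAt
  · -- differentiable on punctured neighborhood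
    -- zeros of deriv v are isolated
    have hdvA : AnalyticAt ℂ (deriv v) z0 := by
      have : AnalyticOnNhd ℂ v univ := fun w _ => hv.analyticAt w
      exact this.deriv z0 (mem_univ z0)
    have hz : ∀ᶠ z in 𝓝[≠] z0, deriv v z ≠ 0 := by
      rcases hdvA.eventually_eq_zero_or_eventually_ne_zero with hev | hne
      · exfalso
        apply hvnc
        refine ⟨v 0, fun z => ?_⟩
        have hdv : Differentiable ℂ (deriv v) := by
          intro w
          have : AnalyticOnNhd ℂ v univ := fun w _ => hv.analyticAt w
          exact ((this.deriv w (mem_univ w)).differentiableAt)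
        have hz0 : ∀ x : ℂ, deriv v x = 0 := by
          intro x
          have hev' : ∀ᶠ w in 𝓝 z0, deriv v w = deriv v z0 := by
            filter_upwards [hev] with w hw
            rw [hw, hev.self_of_nhds]
          have := entire_const_of_eventually (deriv v) hdv z0 hev' x
          rw [this, hev.self_of_nhds]
        exact is_const_of_deriv_eq_zero hv hz0 z 0
      · exact hne
    -- get a punctured ball where deriv v ≠ 0
    obtain ⟨s, hs_open, hs_mem, hs_sub⟩ := mem_nhdsWithin.mp hz
    -- v '' s is a neighborhood of v z0
    have himg : v '' s ∈ 𝓝 (v z0) := by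
      apply hvopen z0
      exact image_mem_map (hs_open.mem_nhds hs_mem)
    have h1 : ∀ᶠ y in 𝓝[≠] (v z0), y ∈ v '' s :=
      mem_nhdsWithin_of_mem_nhds himg
    filter_upwards [h1, self_mem_nhdsWithin] with y hy hy'
    obtain ⟨z, hzs, rfl⟩ := hy
    have hzz0 : z ≠ z0 := fun hzz => hy' (by simp [hzz])
    exact lemA z (hs_sub ⟨hzs, hzz0⟩)
  · -- continuity at v z0
    rw [ContinuousAt, key z0, Metric.tendsto_nhds]
    intro ε hε
    have hcu : ∀ᶠ z in 𝓝 z0, dist (u z) (u z0) < ε :=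
      (hu.continuous.continuousAt (x := z0)).tendsto (Metric.ball_mem_nhds _ hε)
    have : ∀ᶠ y in map v (𝓝 z0), dist (h y) (u z0) < ε := by
      rw [eventually_map]
      filter_upwards [hcu] with z hz
      rw [key]
      exact hz
    exact hvopen z0 this
end

section
/- Let f and g be non-constant entire functions such that for all z, w ∈ ℂ, f(z) = f(w) implies g(z) = g(w). Then: (i) there exists an entire function H with g'(z) = H(z) · f'(z) for all z ∈ ℂ (i.e., f' divides g' in the algebra of entire functions); and (ii) for every z ∈ ℂ there exists an entire function G_z with g(w) − g(z) = (f(w) − f(z)) · G_z(w) for all w ∈ ℂ. -/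
/-!
The fibre condition says exactly that `g = h ∘ f` with `h := g ∘ invFun f`. This `h` is
holomorphic near every value `f w₀`: critical points of `f` are isolated, so near `w₀` but off it
`f` has holomorphic local inverses and `h` is holomorphic there; by the open mapping theorem the
nearby values of `f` fill a punctured neighbourhood of `f w₀` and `h` is continuous at `f w₀`,
which is therefore a removable singularity. Then `g' = (h' ∘ f) · f'` by the chain rule, and
`g w - g z = (f w - f z) · dslope h (f z) (f w)`.
-/

open Filter Topology

section Topology

variable {X Y Z : Type*} [TopologicalSpace X] [TopologicalSpace Y] [TopologicalSpace Z]
  {f : X → Y} {x₀ : X}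

theorem eventually_nhdsNE_of_nhds_le_map {p : Y → Prop} (hmap : 𝓝 (f x₀) ≤ map f (𝓝 x₀))
    (hp : ∀ᶠ x in 𝓝[≠] x₀, p (f x)) : ∀ᶠ y in 𝓝[≠] f x₀, p y := by
  rw [eventually_nhdsWithin_iff] at hp ⊢
  exact hmap (hp.mono fun x hx hfx => hx fun h => hfx (h ▸ rfl))

theorem continuousAt_of_comp_eventuallyEq {g : X → Z} {h : Y → Z}
    (hmap : 𝓝 (f x₀) ≤ map f (𝓝 x₀)) (hg : ContinuousAt g x₀) (hfg : h ∘ f =ᶠ[𝓝 x₀] g) :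
    ContinuousAt h (f x₀) := by
  have hcomp : Tendsto (h ∘ f) (𝓝 x₀) (𝓝 (h (f x₀))) := by
    rw [show h (f x₀) = g x₀ from hfg.eq_of_nhds]
    exact hg.tendsto.congr' hfg.symm
  exact (tendsto_map'_iff.mpr hcomp).mono_left hmap

end Topology

theorem AnalyticAt.differentiableAt_dslope {𝕜 E : Type*} [NontriviallyNormedField 𝕜]
    [NormedAddCommGroup E] [NormedSpace 𝕜 E] {h : 𝕜 → E} {a b : 𝕜} (ha : AnalyticAt 𝕜 h a)
    (hb : DifferentiableAt 𝕜 h b) : DifferentiableAt 𝕜 (dslope h a) b := by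
  rcases eq_or_ne b a with rfl | hne
  · obtain ⟨p, hp⟩ := ha
    exact hp.has_fpower_series_dslope_fslope.differentiableAt
  · exact (differentiableAt_dslope_of_ne hne).mpr hb

theorem eventually_nhdsNE_deriv_ne_zero {f : ℂ → ℂ} (hf : Differentiable ℂ f)
    (hfnc : ¬∃ c : ℂ, ∀ z : ℂ, f z = c) (w₀ : ℂ) : ∀ᶠ w in 𝓝[≠] w₀, deriv f w ≠ 0 := by
  have hf' : AnalyticOnNhd ℂ (deriv f) Set.univ := fun w _ => (hf.analyticAt w).deriv
  refine (hf' w₀ trivial).eventually_eq_zero_or_eventually_ne_zero.resolve_left fun h => hfnc ?_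
  have hzero : deriv f = 0 := hf'.eq_of_eventuallyEq analyticOnNhd_const h
  exact ⟨f 0, fun z => is_const_of_deriv_eq_zero hf (congrFun hzero) z 0⟩

theorem analyticAt_of_comp_eventuallyEq {f g h : ℂ → ℂ} {w₀ : ℂ} (hf : AnalyticAt ℂ f w₀)
    (hf' : ∀ᶠ w in 𝓝[≠] w₀, deriv f w ≠ 0) (hg : AnalyticAt ℂ g w₀)
    (hfg : h ∘ f =ᶠ[𝓝 w₀] g) : AnalyticAt ℂ h (f w₀) := by
  have hnc : ¬∀ᶠ w in 𝓝 w₀, f w = f w₀ := fun hc => by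
    have hderiv : ∀ᶠ w in 𝓝 w₀, deriv f w = 0 := by
      filter_upwards [(show f =ᶠ[𝓝 w₀] fun _ => f w₀ from hc).deriv] with w hw
      rw [hw, deriv_const]
    obtain ⟨w, hw, hw'⟩ := (hf'.and (hderiv.filter_mono nhdsWithin_le_nhds)).exists
    exact hw hw'
  have hmap : 𝓝 (f w₀) ≤ map f (𝓝 w₀) :=
    hf.eventually_constant_or_nhds_le_map_nhds.resolve_left hnc
  have hregular : ∀ᶠ w in 𝓝[≠] w₀, AnalyticAt ℂ h (f w) := by
    filter_upwards [hf', nhdsWithin_le_nhds (hf.eventually_analyticAt.and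
      (hg.eventually_analyticAt.and hfg.eventually_nhds))] with w hw ⟨hfw, hgw, hfgw⟩
    exact (analyticAt_comp_iff_of_deriv_ne_zero hfw hw).mp (hgw.congr (EventuallyEq.symm hfgw))
  refine Complex.analyticAt_of_differentiable_on_punctured_nhds_of_continuousAt ?_
    (continuousAt_of_comp_eventuallyEq hmap hg.continuousAt hfg)
  exact (eventually_nhdsNE_of_nhds_le_map hmap hregular).mono fun _ hy => hy.differentiableAt

theorem exists_analyticAt_comp_eq_of_fiber_refinement {f g : ℂ → ℂ} (hf : Differentiable ℂ f)
    (hfnc : ¬∃ c : ℂ, ∀ z : ℂ, f z = c) (hg : Differentiable ℂ g)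
    (hfib : ∀ z w : ℂ, f z = f w → g z = g w) :
    ∃ h : ℂ → ℂ, (∀ z, AnalyticAt ℂ h (f z)) ∧ h ∘ f = g := by
  have hcomp : g ∘ Function.invFun f ∘ f = g :=
    funext fun w => hfib _ _ (Function.invFun_eq ⟨w, rfl⟩)
  refine ⟨g ∘ Function.invFun f, fun z => ?_, hcomp⟩
  exact analyticAt_of_comp_eventuallyEq (hf.analyticAt z)
    (eventually_nhdsNE_deriv_ne_zero hf hfnc z) (hg.analyticAt z) (.of_eq hcomp)

theorem deriv_divides_of_fiber_refinement_general (f g : ℂ → ℂ)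
    (hf : Differentiable ℂ f) (hg : Differentiable ℂ g)
    (hfnc : ¬∃ c : ℂ, ∀ z : ℂ, f z = c)
    (hfib : ∀ z w : ℂ, f z = f w → g z = g w) :
    (∃ H : ℂ → ℂ, Differentiable ℂ H ∧ ∀ z : ℂ, deriv g z = H z * deriv f z) ∧
    (∀ z : ℂ, ∃ G : ℂ → ℂ, Differentiable ℂ G ∧
      ∀ w : ℂ, g w - g z = (f w - f z) * G w) := by
  obtain ⟨h, hh, rfl⟩ := exists_analyticAt_comp_eq_of_fiber_refinement hf hfnc hg hfib
  refine ⟨⟨deriv h ∘ f, fun z => ?_, fun z => deriv_comp z (hh z).differentiableAt (hf z)⟩,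
    fun z => ⟨dslope h (f z) ∘ f, fun w => ?_, fun w => (sub_smul_dslope h (f z) (f w)).symm⟩⟩
  · exact ((hh z).deriv.comp (hf.analyticAt z)).differentiableAt
  · exact ((hh z).differentiableAt_dslope (hh w).differentiableAt).comp w (hf w)

/-- If `f` and `g` are non-constant entire functions such that the fibers of
`f` refine the fibers of `g`, then (i) `f'` divides `g'` in the algebra of entire functions,
and (ii) for every `z`, `f(w) - f(z)` divides `g(w) - g(z)` as entire functions of `w`. -/
theorem deriv_divides_of_fiber_refinement (f g : ℂ → ℂ)
    (hf : Differentiable ℂ f) (hg : Differentiable ℂ g)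
    (hfnc : ¬∃ c : ℂ, ∀ z : ℂ, f z = c) (hgnc : ¬∃ c : ℂ, ∀ z : ℂ, g z = c)
    (hfib : ∀ z w : ℂ, f z = f w → g z = g w) :
    (∃ H : ℂ → ℂ, Differentiable ℂ H ∧ ∀ z : ℂ, deriv g z = H z * deriv f z) ∧
    (∀ z : ℂ, ∃ G : ℂ → ℂ, Differentiable ℂ G ∧
      ∀ w : ℂ, g w - g z = (f w - f z) * G w) :=
  deriv_divides_of_fiber_refinement_general f g hf hg hfnc hfib
end

section
/- Let f be a non-constant entire function of finite order ρ. Then for every z ∈ ℂ and every real s > ρ, the series ∑ m(w) · |w|^{−s}, taken over the nonzero solutions w of f(w) = f(z), converges (is summable), where m(w) denotes the order of vanishing of the entire function w' ↦ f(w') − f(z) at w. In other words, the convergence exponent of every fiber of f does not exceed the order of f. -/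
open Filter

/-- The maximum modulus `M_f(r) = sup_{|w| = r} |f w|`. -/
noncomputable def maxModulus (f : ℂ → ℂ) (r : ℝ) : ℝ :=
  sSup ((fun w => ‖f w‖) '' Metric.sphere (0 : ℂ) r)

/-- The order of an entire function,
`ρ = limsup_{r → ∞} (log log M_f(r)) / (log r)`, as an extended real number. -/
noncomputable def entireOrder (f : ℂ → ℂ) : EReal :=
  Filter.limsup
    (fun r : ℝ => ((Real.log (Real.log (maxModulus f r)) / Real.log r : ℝ) : EReal))
    Filter.atTop

/-- The order of vanishing of an analytic function `g` at a point `w` (as a natural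
number; junk value `0` if `g` is not analytic at `w` or vanishes identically near `w`). -/
noncomputable def vanishingOrder (g : ℂ → ℂ) (w : ℂ) : ℕ :=
  by classical exact if h : AnalyticAt ℂ g w then (analyticOrderAt g w).toNat else 0

/-!
Jensen's inequality bounds the number `n(R)` of solutions of `f w = c` with `|w| ≤ R`, counted
with multiplicity, by `(log M_f(5R) + O(1)) / log 2`; hence `n(R) = O(R^t)` for every `t`
strictly between the order and `s`. In the dyadic shell `R₀ 2^k ≤ |w| < R₀ 2^(k+1)` the sum of `m(w) |w|^(-s)` is
then at most `(R₀ 2^(k+1))^t (R₀ 2^k)^(-s)`, a geometric sequence in `k`, and the finitely many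
solutions with `|w| < R₀` do not affect summability.
-/

open Asymptotics Metric Real Set

section DyadicSummation

variable {ι : Type*} {N m : ι → ℝ} {t s : ℝ}

theorem summable_mul_rpow_neg_of_sum_le_rpow {R₀ : ℝ} (hm : ∀ i, 0 ≤ m i) (hR₀ : 0 < R₀)
    (hN : ∀ i, R₀ ≤ N i) (hs : 0 ≤ s) (hts : t < s)
    (hcount : ∀ R ≥ R₀, ∀ u : Finset ι, (∀ i ∈ u, N i ≤ R) → ∑ i ∈ u, m i ≤ R ^ t) :
    Summable fun i => m i * N i ^ (-s) := by
  choose k hk using fun i => exists_nat_pow_near ((one_le_div hR₀).2 (hN i)) one_lt_two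
  have hshell_pos : ∀ n : ℕ, 0 < R₀ * 2 ^ n := fun n => by positivity
  set a : ℕ → ℝ := fun n => (R₀ * 2 ^ (n + 1)) ^ t * (R₀ * 2 ^ n) ^ (-s)
  have ha : a = fun n => 2 ^ t * R₀ ^ (t - s) * (2 ^ (t - s)) ^ n := by
    funext n
    simp only [a]
    rw [pow_succ, ← mul_assoc, mul_rpow (hshell_pos n).le (by norm_num), mul_comm _ (2 ^ t),
      mul_assoc, ← rpow_add (hshell_pos n), ← sub_eq_add_neg, mul_rpow hR₀.le (by positivity),
      rpow_pow_comm (by norm_num), mul_assoc]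
  have ha_summable : Summable a := by
    rw [ha]
    exact (summable_geometric_of_lt_one (by positivity)
      (rpow_lt_one_of_one_lt_of_neg one_lt_two (by linarith))).mul_left _
  have hshell : ∀ n (u : Finset ι), ∑ i ∈ u with k i = n, m i * N i ^ (-s) ≤ a n := by
    intro n u
    calc ∑ i ∈ u with k i = n, m i * N i ^ (-s)
        ≤ ∑ i ∈ u with k i = n, m i * (R₀ * 2 ^ n) ^ (-s) := by
          refine Finset.sum_le_sum fun i hi => mul_le_mul_of_nonneg_left ?_ (hm i)
          obtain rfl := (Finset.mem_filter.1 hi).2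
          exact rpow_le_rpow_of_nonpos (hshell_pos _)
            ((le_div_iff₀' hR₀).1 (hk i).1) (by linarith)
      _ = (∑ i ∈ u with k i = n, m i) * (R₀ * 2 ^ n) ^ (-s) := (Finset.sum_mul ..).symm
      _ ≤ a n := by
          refine mul_le_mul_of_nonneg_right (hcount _ ?_ _ fun i hi => ?_) (by positivity)
          · exact le_mul_of_one_le_right hR₀.le (one_le_pow₀ one_le_two)
          · obtain rfl := (Finset.mem_filter.1 hi).2
            exact ((div_lt_iff₀' hR₀).1 (hk i).2).le
  refine summable_of_sum_le (c := ∑' n, a n)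
    (fun i => mul_nonneg (hm i) (rpow_nonneg (hR₀.le.trans (hN i)) _)) fun u => ?_
  calc ∑ i ∈ u, m i * N i ^ (-s)
      = ∑ n ∈ u.image k, ∑ i ∈ u with k i = n, m i * N i ^ (-s) :=
        (Finset.sum_fiberwise_of_maps_to (fun i hi => Finset.mem_image_of_mem k hi) _).symm
    _ ≤ ∑ n ∈ u.image k, a n := Finset.sum_le_sum fun n _ => hshell n u
    _ ≤ ∑' n, a n := ha_summable.sum_le_tsum _ fun n _ => by simp only [a]; positivity

theorem summable_mul_rpow_neg_of_eventually_sum_le_rpow (hm : ∀ i, 0 ≤ m i) (hs : 0 ≤ s)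
    (hts : t < s) (hfin : ∀ R, {i | N i < R}.Finite)
    (hcount : ∀ᶠ R in atTop, ∀ u : Finset ι, (∀ i ∈ u, N i ≤ R) → ∑ i ∈ u, m i ≤ R ^ t) :
    Summable fun i => m i * N i ^ (-s) := by
  obtain ⟨R₁, hR₁⟩ := eventually_atTop.1 hcount
  set R₀ := max R₁ 1
  rw [← (hfin R₀).toFinset.summable_compl_iff]
  refine summable_mul_rpow_neg_of_sum_le_rpow (ι := {i // i ∉ (hfin R₀).toFinset})
    (N := fun i => N i) (m := fun i => m i) (fun i => hm i)
    (one_pos.trans_le (le_max_right R₁ 1)) (fun i => ?_) hs hts fun R hR u hu => ?_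
  · exact not_lt.1 fun h => i.2 ((hfin R₀).mem_toFinset.2 h)
  · simpa using hR₁ R ((le_max_left _ _).trans hR) (u.map (Function.Embedding.subtype _))
      (by simpa using hu)

end DyadicSummation

theorem vanishingOrder_eq_analyticOrderNatAt (g : ℂ → ℂ) (w : ℂ) :
    vanishingOrder g w = analyticOrderNatAt g w := by
  unfold vanishingOrder analyticOrderNatAt
  split_ifs with h
  · rfl
  · rw [analyticOrderAt_of_not_analyticAt h, ENat.toNat_zero]

open MeromorphicOn in
theorem sum_vanishingOrder_le_log_div_log_two {g : ℂ → ℂ} {b : ℂ} {r M : ℝ} (hr : 0 < r)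
    (hM : 1 ≤ M) (hg : AnalyticOnNhd ℂ g (closedBall b (2 * r))) (hb : g b ≠ 0)
    (hbound : ∀ w ∈ sphere b (2 * r), ‖g w‖ ≤ M) {T : Finset ℂ}
    (hT : (T : Set ℂ) ⊆ closedBall b r) :
    (∑ a ∈ T, vanishingOrder g a : ℝ) ≤ log (M / ‖g b‖) / log 2 := by
  have hg' : AnalyticOnNhd ℂ g (closedBall b r) :=
    hg.mono (closedBall_subset_closedBall (by linarith))
  set D := divisor g (closedBall b r)
  have hD : ∀ a ∈ T, (vanishingOrder g a : ℤ) = D a := by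
    intro a ha
    rw [AnalyticOnNhd.divisor_apply hg' (hT ha),
      vanishingOrder_eq_analyticOrderNatAt, analyticOrderNatAt]
    -- at infinite order both sides are junk values `0`
    cases analyticOrderAt g a <;> rfl
  have hfin := D.finiteSupport (isCompact_closedBall b r)
  have hsum : ∑ a ∈ T, (vanishingOrder g a : ℤ) ≤ ∑ᶠ u, D u := by
    rw [finsum_eq_sum_of_support_subset D (s := T ∪ hfin.toFinset) (by simp),
      Finset.sum_congr rfl hD]
    exact Finset.sum_le_sum_of_subset_of_nonneg Finset.subset_union_left fun u _ _ =>
      AnalyticOnNhd.divisor_nonneg hg' u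
  have jensen := AnalyticOnNhd.sum_divisor_le (r := r) (R := 2 * r) (by simpa [abs_of_pos hr])
    (by rw [abs_of_pos hr, abs_of_pos (by linarith)]; linarith) hM
    (by rwa [abs_of_pos (by linarith)]) hb (by rwa [abs_of_pos (by linarith)])
  rw [abs_of_pos hr, mul_div_assoc, div_self hr.ne', mul_one] at jensen
  calc (∑ a ∈ T, vanishingOrder g a : ℝ) = ((∑ a ∈ T, (vanishingOrder g a : ℤ) : ℤ) : ℝ) := by
        push_cast; rfl
    _ ≤ ((∑ᶠ u, D u : ℤ) : ℝ) := by exact_mod_cast hsum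
    _ ≤ _ := jensen

theorem norm_le_maxModulus {f : ℂ → ℂ} (hf : Differentiable ℂ f) {r : ℝ} (hr : 0 < r) {w : ℂ}
    (hw : ‖w‖ ≤ r) : ‖f w‖ ≤ maxModulus f r := by
  have hbdd : BddAbove ((fun w => ‖f w‖) '' sphere (0 : ℂ) r) :=
    ((isCompact_sphere 0 r).image (continuous_norm.comp hf.continuous)).bddAbove
  refine Complex.norm_le_of_forall_mem_frontier_norm_le isBounded_ball hf.diffContOnCl
    (fun x hx => le_csSup hbdd ⟨x, frontier_ball_subset_sphere hx, rfl⟩) ?_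
  rwa [closure_ball 0 hr.ne', mem_closedBall_zero_iff]

theorem eventually_maxModulus_le_exp_rpow {f : ℂ → ℂ} {ρ σ : ℝ} (hord : entireOrder f = ρ)
    (hσ : ρ < σ) : ∀ᶠ r in atTop, maxModulus f r ≤ exp (r ^ σ) := by
  have hlim : ∀ᶠ r in atTop, log (log (maxModulus f r)) / log r < σ := by
    have hlt : entireOrder f < σ := hord ▸ EReal.coe_lt_coe_iff.2 hσ
    exact (eventually_lt_of_limsup_lt hlt).mono fun r hr => EReal.coe_lt_coe_iff.1 hr
  filter_upwards [hlim, eventually_gt_atTop 1] with r hr hr1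
  set M := maxModulus f r
  rcases le_or_gt (log M) 0 with hM | hM
  · have hM1 : |M| ≤ 1 := (log_nonpos_iff (abs_nonneg M)).1 (by rwa [log_abs])
    exact (le_abs_self M).trans (hM1.trans (one_le_exp (rpow_nonneg (by linarith) σ)))
  · have hloglog : log (log M) < log (r ^ σ) := by
      rw [log_rpow (by linarith)]
      exact (div_lt_iff₀ (log_pos hr1)).1 hr
    have hlogM : log M < r ^ σ := (log_lt_log_iff hM (by positivity)).1 hloglog
    calc M ≤ |M| := le_abs_self M
      _ = exp (log M) := (exp_log_eq_abs (fun h => by simp [h] at hM)).symm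
      _ ≤ exp (r ^ σ) := exp_le_exp.2 hlogM.le

theorem eventually_norm_le_exp_rpow {f : ℂ → ℂ} (hf : Differentiable ℂ f) {ρ σ : ℝ}
    (hord : entireOrder f = ρ) (hσ : ρ < σ) :
    ∀ᶠ r in atTop, ∀ w, ‖w‖ ≤ r → ‖f w‖ ≤ exp (r ^ σ) := by
  filter_upwards [eventually_maxModulus_le_exp_rpow hord hσ, eventually_gt_atTop 0]
    with r hr hr0 w hw
  exact (norm_le_maxModulus hf hr0 hw).trans hr

theorem entireOrder_nonneg {f : ℂ → ℂ} (hf : Differentiable ℂ f)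
    (hnc : ¬∃ c : ℂ, ∀ w : ℂ, f w = c) {ρ : ℝ} (hord : entireOrder f = ρ) : 0 ≤ ρ := by
  by_contra! hρ
  obtain ⟨r₀, hr₀⟩ := eventually_atTop.1 (eventually_norm_le_exp_rpow hf hord hρ)
  refine hnc (hf.exists_const_forall_eq_of_bounded ?_)
  refine isBounded_iff_forall_norm_le.2 ⟨exp 1, forall_mem_range.2 fun w => ?_⟩
  simpa using hr₀ (max r₀ ‖w‖) (le_max_left _ _) w (le_max_right _ _)

theorem AnalyticOnNhd.finite_inter_preimage_zero {𝕜 E : Type*} [NontriviallyNormedField 𝕜]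
    [ConnectedSpace 𝕜] [NormedAddCommGroup E] [NormedSpace 𝕜 E] {g : 𝕜 → E}
    (hg : AnalyticOnNhd 𝕜 g univ) {b : 𝕜} (hb : g b ≠ 0) {K : Set 𝕜} (hK : IsCompact K) :
    (K ∩ g ⁻¹' {0}).Finite := by
  simpa [sdiff_eq] using hK.finite_sdiff_of_mem_codiscreteWithin
    (codiscreteWithin_mono (subset_univ K) (hg.preimage_zero_mem_codiscrete hb))

theorem isLittleO_rpow_rpow_atTop {a b : ℝ} (hab : a < b) :
    (fun x : ℝ => x ^ a) =o[atTop] fun x => x ^ b := by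
  refine (isLittleO_iff_tendsto' ?_).2 ?_
  · filter_upwards [eventually_gt_atTop 0] with x hx h
    exact absurd h (rpow_pos_of_pos hx b).ne'
  · refine (tendsto_rpow_neg_atTop (sub_pos.2 hab)).congr' ?_
    filter_upwards [eventually_gt_atTop 0] with x hx
    rw [← rpow_sub hx, neg_sub]

theorem eventually_mul_rpow_add_le_mul_rpow {a σ t ε : ℝ} (C : ℝ) (ha : 0 ≤ a) (hσt : σ < t)
    (ht : 0 < t) (hε : 0 < ε) : ∀ᶠ R in atTop, (a * R) ^ σ + C ≤ ε * R ^ t := by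
  have hsmall : (fun R : ℝ => (a * R) ^ σ + C) =o[atTop] fun R => R ^ t := by
    refine IsLittleO.add ?_ (isLittleO_const_left.2 (Or.inr
      (tendsto_norm_atTop_atTop.comp (tendsto_rpow_atTop ht))))
    refine ((isLittleO_rpow_rpow_atTop hσt).const_mul_left (a ^ σ)).congr' ?_ EventuallyEq.rfl
    filter_upwards [eventually_ge_atTop 0] with R hR
    rw [mul_rpow ha hR]
  filter_upwards [hsmall.bound hε, eventually_ge_atTop 0] with R hR hR0
  rw [norm_of_nonneg (rpow_nonneg hR0 t)] at hR
  exact (le_norm_self _).trans hR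

theorem eventually_sum_vanishingOrder_sub_le_rpow {f : ℂ → ℂ} (hf : Differentiable ℂ f)
    {σ t : ℝ} (hσt : σ < t) (ht : 0 < t)
    (hgrowth : ∀ᶠ r in atTop, ∀ w, ‖w‖ ≤ r → ‖f w‖ ≤ exp (r ^ σ)) {b c : ℂ} (hb : f b ≠ c) :
    ∀ᶠ R in atTop, ∀ T : Finset ℂ, (T : Set ℂ) ⊆ closedBall 0 R →
      (∑ a ∈ T, vanishingOrder (fun w => f w - c) a : ℝ) ≤ R ^ t := by
  set g := fun w => f w - c
  have hgb : g b ≠ 0 := sub_ne_zero.2 hb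
  filter_upwards [eventually_mul_rpow_add_le_mul_rpow (log (1 + ‖c‖) - log ‖g b‖)
      (by norm_num : (0 : ℝ) ≤ 5) hσt ht (log_pos one_lt_two),
    (tendsto_id.const_mul_atTop (by norm_num : (0 : ℝ) < 5)).eventually hgrowth,
    eventually_ge_atTop ‖b‖, eventually_gt_atTop 0] with R hlog hgrowthR hbR hR T hT
  set M := (1 + ‖c‖) * exp ((5 * R) ^ σ)
  have hM : 1 ≤ M := one_le_mul_of_one_le_of_one_le (by simp)
    (one_le_exp (rpow_nonneg (by positivity) σ))
  have hTb : (T : Set ℂ) ⊆ closedBall b (2 * R) := fun a ha => by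
    have := mem_closedBall_zero_iff.1 (hT ha)
    rw [mem_closedBall, dist_eq_norm]
    linarith [norm_sub_le a b]
  have hbound : ∀ w ∈ sphere b (2 * (2 * R)), ‖g w‖ ≤ M := fun w hw => by
    have hw5 : ‖w‖ ≤ 5 * R := by
      rw [mem_sphere, dist_eq_norm] at hw
      linarith [norm_le_norm_add_norm_sub' w b]
    calc ‖g w‖ ≤ ‖f w‖ + ‖c‖ := norm_sub_le _ _
      _ ≤ exp ((5 * R) ^ σ) + ‖c‖ := by gcongr; exact hgrowthR w hw5
      _ ≤ M := by
        nlinarith [one_le_exp (rpow_nonneg (by positivity : (0 : ℝ) ≤ 5 * R) σ), norm_nonneg c]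
  calc (∑ a ∈ T, vanishingOrder g a : ℝ) ≤ log (M / ‖g b‖) / log 2 :=
        sum_vanishingOrder_le_log_div_log_two (by positivity) hM
          (fun w _ => (hf.sub_const c).analyticAt w) hgb hbound hTb
    _ ≤ R ^ t := by
        rw [div_le_iff₀ (log_pos one_lt_two), log_div (by positivity) (norm_ne_zero_iff.2 hgb),
          log_mul (by positivity) (exp_pos _).ne', log_exp]
        linarith

/-- For a non-constant entire function `f` of finite order `ρ`, the
convergence exponent of every fiber of `f` is at most `ρ`: for every `z` and every
`s > ρ`, the series `∑ m(w)·|w|^{-s}` over the nonzero solutions of `f(w) = f(z)`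
(with multiplicities `m(w)`) converges. -/
theorem fiber_convergence_exponent_le_order (f : ℂ → ℂ) (hf : Differentiable ℂ f)
    (hnc : ¬∃ c : ℂ, ∀ w : ℂ, f w = c) (ρ : ℝ) (hord : entireOrder f = (ρ : EReal)) :
    ∀ z : ℂ, ∀ s : ℝ, ρ < s →
      Summable (fun w : {w : ℂ // f w = f z ∧ w ≠ 0} =>
        (vanishingOrder (fun w' => f w' - f z) (w : ℂ) : ℝ) * ‖(w : ℂ)‖ ^ (-s)) := by
  intro z s hs
  have hρ := entireOrder_nonneg hf hnc hord
  obtain ⟨σ, hρσ, hσs⟩ := exists_between hs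
  obtain ⟨t, hσt, hts⟩ := exists_between hσs
  obtain ⟨b, hb⟩ := not_forall.1 (not_exists.1 hnc (f z))
  have hzeros_finite (R : ℝ) : (closedBall 0 R ∩ (fun w => f w - f z) ⁻¹' {0}).Finite :=
    AnalyticOnNhd.finite_inter_preimage_zero (fun w _ => (hf.sub_const (f z)).analyticAt w)
      (sub_ne_zero.2 hb) (isCompact_closedBall 0 R)
  refine summable_mul_rpow_neg_of_eventually_sum_le_rpow (fun _ => Nat.cast_nonneg _)
    (by linarith) hts (fun R => ?_) ?_
  · refine ((hzeros_finite R).preimage Subtype.val_injective.injOn).subset fun w hw => ?_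
    exact ⟨mem_closedBall_zero_iff.2 (le_of_lt hw), sub_eq_zero.2 w.2.1⟩
  · filter_upwards [eventually_sum_vanishingOrder_sub_le_rpow hf hσt (by linarith)
      (eventually_norm_le_exp_rpow hf hord hρσ) hb] with R hR u hu
    have hsum := hR (u.image Subtype.val) (by simpa [subset_def] using hu)
    rwa [Finset.sum_image Subtype.val_injective.injOn] at hsum
end

section
/- Let f be a non-constant entire function, z ∈ ℂ, and R > 0 such that f(w) ≠ f(z) for all w with |w| = R, and such that every solution w of f(w) = f(z) with |w| < R is simple, i.e. f'(w) ≠ 0. Then the set of such solutions is finite and ∮_{|w|=R} (f(w) − f(z))^{−1} dw = 2πi · ∑_{w : f(w) = f(z), |w| < R} (f'(w))^{−1}. -/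
/-!
Peel off the zeros one at a time. If `g a = 0` and `g' a ≠ 0`, then `g = (x - a) k` with
`k = dslope g a` and `k a = g' a ≠ 0`, and `φ / g = (φ a / k a) / (x - a) + M / k`, where `M` is the
divided difference at `a` of `φ - (φ a / k a) k`, hence holomorphic. The first term contributes
`2πi φ a / g' a` by Cauchy's formula; the zeros of `k` are the remaining zeros of `g`, still simple,
and at each of them `M / k' = φ / g'`, so induction on the set of zeros applies. When no zeros are
left, Cauchy's theorem gives `0`. The zeros in the disk are finitely many because those of a
nonzero entire function form a discrete set.
-/

open Metric Set Filter Real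

section DSlope

variable {𝕜 : Type*} [NontriviallyNormedField 𝕜] {g : 𝕜 → 𝕜} {a w : 𝕜}

theorem dslope_eq_zero_iff_of_ne (ha : g a = 0) (hw : w ≠ a) : dslope g a w = 0 ↔ g w = 0 := by
  rw [← sub_smul_dslope_of_zero ha w, smul_eq_mul, mul_eq_zero, or_iff_right (sub_ne_zero.2 hw)]

theorem deriv_eq_sub_mul_deriv_dslope (ha : g a = 0) (hk : DifferentiableAt 𝕜 (dslope g a) w)
    (hw : dslope g a w = 0) : deriv g w = (w - a) * deriv (dslope g a) w := by
  have h : HasDerivAt (fun x => (x - a) * dslope g a x) _ w :=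
    ((hasDerivAt_id' w).sub_const a).mul hk.hasDerivAt
  rw [show (fun x => (x - a) * dslope g a x) = g from
    funext fun x => sub_smul_dslope_of_zero ha x] at h
  simpa [hw] using h.deriv

end DSlope

theorem Differentiable.finite_inter_preimage_zero {g : ℂ → ℂ} (hg : Differentiable ℂ g) {x : ℂ}
    (hx : g x ≠ 0) {K : Set ℂ} (hK : IsCompact K) : (K ∩ g ⁻¹' {0}).Finite := by
  have hcod := (hg.differentiableOn.analyticOnNhd isOpen_univ).preimage_zero_mem_codiscrete hx
  simpa [sdiff_eq] using hK.finite_sdiff_of_mem_codiscreteWithin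
    (codiscreteWithin_mono (subset_univ K) hcod)

namespace Complex

variable {c : ℂ} {R : ℝ}

theorem circleIntegral_div_eq_zero {φ g : ℂ → ℂ} (hR : 0 ≤ R)
    (hφ : DifferentiableOn ℂ φ (closedBall c R)) (hg : DifferentiableOn ℂ g (closedBall c R))
    (hg0 : ∀ w ∈ closedBall c R, g w ≠ 0) : ∮ w in C(c, R), φ w / g w = 0 :=
  ((hφ.div hg hg0).diffContOnCl_ball subset_rfl).circleIntegral_eq_zero hR

theorem circleIntegral_div_sub_mul {φ k : ℂ → ℂ} {a : ℂ} (ha : a ∈ ball c R)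
    (hφ : DifferentiableOn ℂ φ (closedBall c R)) (hk : DifferentiableOn ℂ k (closedBall c R))
    (hka : k a ≠ 0) (hk0 : ∀ x ∈ sphere c R, k x ≠ 0) :
    ∮ x in C(c, R), φ x / ((x - a) * k x) =
      2 * π * I * (φ a / k a) +
        ∮ x in C(c, R), dslope (fun x => φ x - φ a / k a * k x) a x / k x := by
  set M := dslope (fun x => φ x - φ a / k a * k x) a
  have hR : 0 < R := pos_of_mem_ball ha
  have ha_sphere : ∀ x ∈ sphere c R, x - a ≠ 0 := fun x hx => by
    rw [sub_ne_zero]; rintro rfl; exact (mem_ball.1 ha).ne (mem_sphere.1 hx)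
  have hsplit : EqOn (fun x => φ x / ((x - a) * k x))
      (fun x => φ a / k a * (x - a)⁻¹ + M x / k x) (sphere c R) := by
    intro x hx
    have hM : (x - a) * M x = φ x - φ a / k a * k x := by
      simpa [hka] using sub_smul_dslope (fun x => φ x - φ a / k a * k x) a x
    generalize φ a / k a = b at hM ⊢
    have := ha_sphere x hx
    have := hk0 x hx
    field_simp
    linear_combination -hM
  have hM : DifferentiableOn ℂ M (closedBall c R) :=
    (differentiableOn_dslope (closedBall_mem_nhds_of_mem ha)).2 (hφ.sub (hk.const_mul _))
  have hk_cont := hk.continuousOn.mono sphere_subset_closedBall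
  rw [circleIntegral.integral_congr hR.le hsplit, circleIntegral.integral_add,
    circleIntegral.integral_const_mul, circleIntegral.integral_sub_inv_of_mem_ball ha]
  · ring
  · exact (continuousOn_const.mul ((continuousOn_id.sub continuousOn_const).inv₀ ha_sphere))
      |>.circleIntegrable hR.le
  · exact (hM.continuousOn.mono sphere_subset_closedBall).div hk_cont hk0
      |>.circleIntegrable hR.le

theorem circleIntegral_div_eq_sum_div_deriv (hR : 0 ≤ R) (s : Finset ℂ) {φ g : ℂ → ℂ}
    (hφ : DifferentiableOn ℂ φ (closedBall c R)) (hg : DifferentiableOn ℂ g (closedBall c R))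
    (hs : ↑s ⊆ ball c R) (hzero : ∀ w ∈ closedBall c R, g w = 0 ↔ w ∈ s)
    (hsimple : ∀ w ∈ s, deriv g w ≠ 0) :
    ∮ w in C(c, R), φ w / g w = 2 * π * I * ∑ w ∈ s, φ w / deriv g w := by
  induction s using Finset.induction generalizing φ g with
  | empty =>
    simp only [Finset.sum_empty, mul_zero]
    exact circleIntegral_div_eq_zero hR hφ hg fun w hw => by simpa using hzero w hw
  | @insert a t hat ih =>
    have ha : a ∈ ball c R := hs (Finset.mem_insert_self a t)
    have hts : ↑t ⊆ ball c R := (Finset.coe_subset.2 (Finset.subset_insert a t)).trans hs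
    have hga : g a = 0 := (hzero a (ball_subset_closedBall ha)).2 (Finset.mem_insert_self a t)
    set k := dslope g a
    have hk : DifferentiableOn ℂ k (closedBall c R) :=
      (differentiableOn_dslope (closedBall_mem_nhds_of_mem ha)).2 hg
    have hgk : ∀ x, (x - a) * k x = g x := sub_smul_dslope_of_zero hga
    have hka : k a = deriv g a := dslope_same g a
    have hka0 : k a ≠ 0 := hka ▸ hsimple a (Finset.mem_insert_self a t)
    have hk_zero : ∀ w ∈ closedBall c R, k w = 0 ↔ w ∈ t := fun w hw => by
      rcases eq_or_ne w a with rfl | hwa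
      · simp [hka0, hat]
      · rw [dslope_eq_zero_iff_of_ne hga hwa, hzero w hw, Finset.mem_insert, or_iff_right hwa]
    have hk_sphere : ∀ x ∈ sphere c R, k x ≠ 0 := fun x hx h =>
      (mem_ball.1 (hts ((hk_zero x (sphere_subset_closedBall hx)).1 h))).ne (mem_sphere.1 hx)
    have hderiv : ∀ w ∈ t, deriv g w = (w - a) * deriv k w := fun w hw =>
      deriv_eq_sub_mul_deriv_dslope hga
        (hk.differentiableAt (closedBall_mem_nhds_of_mem (hts hw)))
        ((hk_zero w (ball_subset_closedBall (hts hw))).2 hw)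
    have hk_simple : ∀ w ∈ t, deriv k w ≠ 0 := fun w hw h =>
      hsimple w (Finset.mem_insert_of_mem hw) (by rw [hderiv w hw, h, mul_zero])
    set M := dslope (fun x => φ x - φ a / k a * k x) a
    have hM : DifferentiableOn ℂ M (closedBall c R) :=
      (differentiableOn_dslope (closedBall_mem_nhds_of_mem ha)).2 (hφ.sub (hk.const_mul _))
    have hresidue : ∀ w ∈ t, M w / deriv k w = φ w / deriv g w := fun w hw => by
      have hwa : w - a ≠ 0 := sub_ne_zero.2 fun h => hat (h ▸ hw)
      have hMw : (w - a) * M w = φ w := by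
        simpa [hka0, (hk_zero w (ball_subset_closedBall (hts hw))).2 hw] using
          sub_smul_dslope (fun x => φ x - φ a / k a * k x) a w
      rw [hderiv w hw, ← hMw, mul_div_mul_left _ _ hwa]
    calc ∮ x in C(c, R), φ x / g x = ∮ x in C(c, R), φ x / ((x - a) * k x) := by
          simp only [hgk]
      _ = 2 * π * I * (φ a / k a) + ∮ x in C(c, R), M x / k x :=
          circleIntegral_div_sub_mul ha hφ hk hka0 hk_sphere
      _ = 2 * π * I * ∑ w ∈ insert a t, φ w / deriv g w := by
          rw [ih hM hk hts hk_zero hk_simple, Finset.sum_insert hat, hka,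
            Finset.sum_congr rfl hresidue]
          ring

end Complex

theorem circle_integral_eq_sum_inv_deriv_general (f : ℂ → ℂ) (hf : Differentiable ℂ f)
    (z : ℂ) (R : ℝ) (hR : 0 < R)
    (hcirc : ∀ w : ℂ, ‖w‖ = R → f w ≠ f z)
    (hsimple : ∀ w : ℂ, f w = f z → ‖w‖ < R → deriv f w ≠ 0) :
    {w : ℂ | f w = f z ∧ ‖w‖ < R}.Finite ∧
    (∮ w in C(0, R), (f w - f z)⁻¹) =
      2 * Real.pi * Complex.I *
        ∑' w : {w : ℂ // f w = f z ∧ ‖w‖ < R}, (deriv f (w : ℂ))⁻¹ := by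
  have hfin : {w : ℂ | f w = f z ∧ ‖w‖ < R}.Finite := by
    refine ((hf.sub_const (f z)).finite_inter_preimage_zero (x := R) ?_
      (isCompact_closedBall 0 R)).subset fun w hw => ⟨?_, ?_⟩
    · exact sub_ne_zero.2 (hcirc R (by simp [hR.le]))
    · simpa using hw.2.le
    · simpa [sub_eq_zero] using hw.1
  refine ⟨hfin, ?_⟩
  have hmem : ∀ w, w ∈ hfin.toFinset ↔ f w = f z ∧ ‖w‖ < R := fun w => hfin.mem_toFinset
  have hzero : ∀ w ∈ closedBall 0 R, f w - f z = 0 ↔ w ∈ hfin.toFinset := fun w hw => by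
    rw [hmem, sub_eq_zero]
    exact ⟨fun h => ⟨h, (mem_closedBall_zero_iff.1 hw).lt_of_ne fun h' => hcirc w h' h⟩, And.left⟩
  have key := Complex.circleIntegral_div_eq_sum_div_deriv hR.le hfin.toFinset
    (differentiableOn_const 1) (hf.sub_const (f z)).differentiableOn
    (fun w hw => by simpa using ((hmem w).1 hw).2) hzero
    (fun w hw => by simpa using hsimple w ((hmem w).1 hw).1 ((hmem w).1 hw).2)
  have hsum : ∑' w : {w : ℂ // f w = f z ∧ ‖w‖ < R}, (deriv f w)⁻¹ =
      ∑ w ∈ hfin.toFinset, (deriv f w)⁻¹ := by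
    rw [← Finset.tsum_subtype', hfin.coe_toFinset]
    rfl
  simpa only [one_div, deriv_sub_const, hsum] using key

/-- If `f` is a non-constant entire function, the circle `|w| = R`
avoids the fiber of `z`, and every solution of `f w = f z` with `|w| < R` is simple
(`f'(w) ≠ 0`), then that set of solutions is finite and
`∮_{|w|=R} (f(w) - f(z))⁻¹ dw = 2πi · ∑ (f'(w))⁻¹`, the sum running over the solutions
in the disk. -/
theorem circle_integral_eq_sum_inv_deriv (f : ℂ → ℂ) (hf : Differentiable ℂ f)
    (hnc : ¬∃ c : ℂ, ∀ w : ℂ, f w = c) (z : ℂ) (R : ℝ) (hR : 0 < R)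
    (hcirc : ∀ w : ℂ, ‖w‖ = R → f w ≠ f z)
    (hsimple : ∀ w : ℂ, f w = f z → ‖w‖ < R → deriv f w ≠ 0) :
    {w : ℂ | f w = f z ∧ ‖w‖ < R}.Finite ∧
    (∮ w in C(0, R), (f w - f z)⁻¹) =
      2 * Real.pi * Complex.I *
        ∑' w : {w : ℂ // f w = f z ∧ ‖w‖ < R}, (deriv f (w : ℂ))⁻¹ :=
  circle_integral_eq_sum_inv_deriv_general f hf z R hR hcirc hsimple
end

section
/- Let f be a non-constant entire function. Then the following are equivalent: (i) every non-constant entire function h can be written as h = g ∘ f for some non-constant entire function g (i.e., the right-shift operator R_f maps the class of non-constant entire functions onto itself); (ii) there exist a, b ∈ ℂ with a ≠ 0 such that f(w) = a·w + b for all w ∈ ℂ. -/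
/-!
If every non-constant entire function factors through `f`, then so does the identity, so `f` has
an entire left inverse `g`. Hence `f` is injective, `f' ≠ 0`, and `f` is proper since
`f⁻¹ K ⊆ g K`. Properness makes `ψ(w) = 1 / (f(1/w) - f(0))` tend to `0` at `0`, so by Riemann's
removable singularity theorem `ψ` is differentiable at `0`. Then the nowhere vanishing entire
function `z / (f(z) - f(0))` equals `ψ(w) / w` at `w = 1/z` and so has a limit at `∞`; by
Liouville it is constant, i.e. `f` is affine. Conversely, for affine `f` take `g = h ∘ f⁻¹`.
-/

open Filter Topology Bornology Function

theorem tendsto_cocompact_of_leftInverse {X Y : Type*} [TopologicalSpace X] [TopologicalSpace Y]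
    {f : X → Y} {g : Y → X} (hg : Continuous g) (hgf : LeftInverse g f) :
    Tendsto f (cocompact X) (cocompact Y) :=
  (hasBasis_cocompact.tendsto_iff hasBasis_cocompact).2 fun K hK =>
    ⟨g '' K, hK.image hg, fun x hx hfx => hx ⟨f x, hfx, hgf x⟩⟩

theorem deriv_ne_zero_of_leftInverse {𝕜 : Type*} [NontriviallyNormedField 𝕜] {f g : 𝕜 → 𝕜}
    {x : 𝕜} (hf : DifferentiableAt 𝕜 f x) (hg : DifferentiableAt 𝕜 g (f x))
    (hgf : LeftInverse g f) : deriv f x ≠ 0 :=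
  right_ne_zero_of_mul_eq_one <| by rw [← deriv_comp x hg hf, hgf.comp_eq_id, deriv_id]

theorem dslope_ne_zero_of_injective {𝕜 E : Type*} [NontriviallyNormedField 𝕜]
    [NormedAddCommGroup E] [NormedSpace 𝕜 E] {f : 𝕜 → E} (hinj : Injective f) {a : 𝕜}
    (ha : deriv f a ≠ 0) (z : 𝕜) : dslope f a z ≠ 0 := by
  rcases eq_or_ne z a with rfl | hz
  · rwa [dslope_same]
  · rw [dslope_of_ne f hz, slope_def_module]
    exact smul_ne_zero (inv_ne_zero (sub_ne_zero.2 hz)) (sub_ne_zero.2 (hinj.ne hz))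

/-- `f` seen from `∞` through the chart `w ↦ 1 / w` on both sides, normalised to send `∞` to `0`.
Since `0⁻¹ = 0` in Lean, `invConj f 0 = (f 0 - f 0)⁻¹ = 0`. -/
noncomputable def invConj (f : ℂ → ℂ) (w : ℂ) : ℂ := (f w⁻¹ - f 0)⁻¹

section invConj

variable {f : ℂ → ℂ}

theorem differentiableAt_invConj (hf : Differentiable ℂ f) (hinj : Injective f) {w : ℂ}
    (hw : w ≠ 0) : DifferentiableAt ℂ (invConj f) w :=
  ((hf _).comp w (differentiableAt_inv hw) |>.sub_const _).inv <|
    sub_ne_zero.2 <| hinj.ne (inv_ne_zero hw)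

theorem tendsto_invConj_nhdsNE_zero (hprop : Tendsto f (cobounded ℂ) (cobounded ℂ)) :
    Tendsto (invConj f) (𝓝[≠] 0) (𝓝 0) :=
  tendsto_inv₀_cobounded.comp <|
    (tendsto_sub_const_cobounded _).comp <| hprop.comp tendsto_inv₀_nhdsNE_zero

theorem differentiableAt_zero_invConj (hf : Differentiable ℂ f) (hinj : Injective f)
    (hprop : Tendsto f (cobounded ℂ) (cobounded ℂ)) : DifferentiableAt ℂ (invConj f) 0 := by
  have hcont : ContinuousAt (invConj f) 0 := by
    rw [← continuousWithinAt_compl_self, ContinuousWithinAt]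
    simpa [invConj] using tendsto_invConj_nhdsNE_zero hprop
  exact (Complex.analyticAt_of_differentiable_on_punctured_nhds_of_continuousAt
    (eventually_nhdsWithin_of_forall fun _ hw => differentiableAt_invConj hf hinj hw)
    hcont).differentiableAt

theorem tendsto_inv_dslope_cobounded (hf : Differentiable ℂ f) (hinj : Injective f)
    (hprop : Tendsto f (cobounded ℂ) (cobounded ℂ)) :
    Tendsto (fun z => (dslope f 0 z)⁻¹) (cobounded ℂ) (𝓝 (deriv (invConj f) 0)) := by
  refine ((differentiableAt_zero_invConj hf hinj hprop).hasDerivAt.tendsto_slope.comp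
    tendsto_inv₀_cobounded').congr' ?_
  filter_upwards [eventually_ne_cobounded 0] with z hz
  simp [invConj, dslope_of_ne f hz, slope_def_field, div_eq_mul_inv, mul_comm]

end invConj

theorem exists_affine_of_injective_of_tendsto_cobounded {f : ℂ → ℂ} (hf : Differentiable ℂ f)
    (hinj : Injective f) (hd : deriv f 0 ≠ 0) (hprop : Tendsto f (cobounded ℂ) (cobounded ℂ)) :
    ∃ a b : ℂ, a ≠ 0 ∧ ∀ w : ℂ, f w = a * w + b := by
  have hslope : Differentiable ℂ (dslope f 0) := fun z =>
    (Complex.differentiableOn_dslope univ_mem).2 hf.differentiableOn z trivial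
      |>.differentiableAt univ_mem
  have hne := dslope_ne_zero_of_injective hinj hd
  have hconst := (hslope.inv hne).eq_const_of_tendsto_cocompact <| by
    rw [← Metric.cobounded_eq_cocompact]
    exact tendsto_inv_dslope_cobounded hf hinj hprop
  refine ⟨dslope f 0 0, f 0, hne 0, fun w => ?_⟩
  have hw : dslope f 0 w = dslope f 0 0 :=
    inv_injective ((congr_fun hconst w).trans (congr_fun hconst 0).symm)
  have h := sub_smul_dslope f 0 w
  rw [hw, sub_zero, smul_eq_mul] at h
  linear_combination -h

theorem exists_affine_of_leftInverse {f g : ℂ → ℂ} (hf : Differentiable ℂ f)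
    (hg : Differentiable ℂ g) (hgf : LeftInverse g f) :
    ∃ a b : ℂ, a ≠ 0 ∧ ∀ w : ℂ, f w = a * w + b := by
  refine exists_affine_of_injective_of_tendsto_cobounded hf hgf.injective
    (deriv_ne_zero_of_leftInverse (hf 0) (hg _) hgf) ?_
  rw [Metric.cobounded_eq_cocompact]
  exact tendsto_cocompact_of_leftInverse hg.continuous hgf

theorem rightShift_surjective_iff_affine_general (f : ℂ → ℂ) (hf : Differentiable ℂ f) :
    (∀ h : ℂ → ℂ, Differentiable ℂ h → (¬∃ c : ℂ, ∀ w : ℂ, h w = c) →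
      ∃ g : ℂ → ℂ, Differentiable ℂ g ∧ (¬∃ c : ℂ, ∀ w : ℂ, g w = c) ∧
        ∀ w : ℂ, h w = g (f w)) ↔
    (∃ a b : ℂ, a ≠ 0 ∧ ∀ w : ℂ, f w = a * w + b) := by
  constructor
  · intro hsurj
    have hid : ¬∃ c : ℂ, ∀ w : ℂ, id w = c := fun ⟨c, hc⟩ =>
      zero_ne_one ((hc 0).trans (hc 1).symm)
    obtain ⟨g, hg, -, hgf⟩ := hsurj id differentiable_id hid
    exact exists_affine_of_leftInverse hf hg fun w => (hgf w).symm
  · rintro ⟨a, b, ha, hab⟩ h hh hnc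
    have hfactor : ∀ w, h w = h ((f w - b) / a) := fun w => by
      rw [hab, add_sub_cancel_right, mul_div_cancel_left₀ w ha]
    exact ⟨fun z => h ((z - b) / a), hh.comp ((differentiable_id.sub_const b).div_const a),
      fun ⟨c, hc⟩ => hnc ⟨c, fun w => (hfactor w).trans (hc (f w))⟩, hfactor⟩

/-- For a non-constant entire function `f`, the right-shift operator
`R_f` maps the class of non-constant entire functions *onto* itself (i.e. every
non-constant entire `h` factors as `h = g ∘ f` with `g` non-constant entire) if and only
if `f` is affine: `f(w) = a·w + b` with `a ≠ 0`. -/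
theorem rightShift_surjective_iff_affine (f : ℂ → ℂ) (hf : Differentiable ℂ f)
    (hnc : ¬∃ c : ℂ, ∀ w : ℂ, f w = c) :
    (∀ h : ℂ → ℂ, Differentiable ℂ h → (¬∃ c : ℂ, ∀ w : ℂ, h w = c) →
      ∃ g : ℂ → ℂ, Differentiable ℂ g ∧ (¬∃ c : ℂ, ∀ w : ℂ, g w = c) ∧
        ∀ w : ℂ, h w = g (f w)) ↔
    (∃ a b : ℂ, a ≠ 0 ∧ ∀ w : ℂ, f w = a * w + b) :=
  rightShift_surjective_iff_affine_general f hf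
end

section
/- Let f be a non-constant entire function. For a, b ∈ ℂ define the f-path distance d_f(a,b) as the infimum, over all continuously differentiable paths γ : [0,1] → ℂ with γ(0) = a and γ(1) = b, of the length of the image path f ∘ γ, namely l_f(γ) = ∫₀¹ |f'(γ(t))| · |γ'(t)| dt. Then d_f is a metric on ℂ: for all a, b, c ∈ ℂ, d_f(a,b) = d_f(b,a); d_f(a,b) = 0 if and only if a = b; and d_f(a,c) ≤ d_f(a,b) + d_f(b,c). -/
/-!
`d_f` is the path distance of the conformal weight `|f'|`. Symmetry, vanishing on the diagonal
and the triangle inequality hold for the path distance of any continuous nonnegative weight on a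
normed space: reverse a path, resp. join two paths after reparametrising each by the smoothstep
`3 s² - 2 s³`, whose velocity vanishes at both ends, so that the concatenation is again `C¹`.

Positivity off the diagonal is where `f` enters. A nonconstant entire function takes the value
`f a` only at isolated points, so `|f z - f a| ≥ m > 0` on a small circle about `a`. A path from
`a` to `b` crosses that circle, and by the fundamental theorem of calculus its `f`-length bounds
`|f (γ t) - f a|` at the crossing time, hence is at least `m`.
-/

/-- The `f`-path distance `d_f(a,b)`: the infimum of the `f`-lengths
`l_f(γ) = ∫₀¹ |f'(γ(t))|·|γ'(t)| dt` of the image paths `f ∘ γ` over all continuously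
differentiable paths `γ` from `a` to `b`. -/
noncomputable def fPathDist (f : ℂ → ℂ) (a b : ℂ) : ℝ :=
  sInf {l : ℝ | ∃ γ : ℝ → ℂ, ContDiff ℝ 1 γ ∧ γ 0 = a ∧ γ 1 = b ∧
    l = ∫ t in (0 : ℝ)..1, ‖deriv f (γ t)‖ * ‖deriv γ t‖}

open Set intervalIntegral

section WeightedLength

variable {E : Type*} [NormedAddCommGroup E] [NormedSpace ℝ E]

theorem integral_mul_norm_deriv_comp {w : E → ℝ} (hw : Continuous w) {γ : ℝ → E}
    (hγ : ContDiff ℝ 1 γ) {ψ : ℝ → ℝ} (hψ : ContDiff ℝ 1 ψ) {a b : ℝ} (hab : a ≤ b)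
    (hψ' : ∀ t ∈ Icc a b, 0 ≤ deriv ψ t) :
    ∫ t in a..b, w (γ (ψ t)) * ‖deriv (fun t => γ (ψ t)) t‖ =
      ∫ s in ψ a..ψ b, w (γ s) * ‖deriv γ s‖ := by
  rw [← integral_deriv_smul_comp (fun t _ => (hψ.differentiable one_ne_zero t).hasDerivAt)
    (hψ.continuous_deriv le_rfl).continuousOn
    (g := fun s => w (γ s) * ‖deriv γ s‖)
    ((hw.comp hγ.continuous).mul (hγ.continuous_deriv le_rfl).norm)]
  refine integral_congr fun t ht => ?_
  rw [uIcc_of_le hab] at ht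
  rw [← Function.comp_def,
    deriv.scomp t (hγ.differentiable one_ne_zero _) (hψ.differentiable one_ne_zero _), norm_smul,
    Real.norm_of_nonneg (hψ' t ht), Function.comp_apply, smul_eq_mul]
  ring

theorem hasDerivAt_ite_le {u v : ℝ → E} (hu : Differentiable ℝ u) (hv : Differentiable ℝ v)
    {c : ℝ} (huv : u c = v c) (huv' : deriv u c = deriv v c) (t : ℝ) :
    HasDerivAt (fun s => if s ≤ c then u s else v s)
      (if t ≤ c then deriv u t else deriv v t) t := by
  rcases lt_trichotomy t c with htc | rfl | htc
  · rw [if_pos htc.le]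
    refine (hu t).hasDerivAt.congr_of_eventuallyEq ?_
    filter_upwards [Iio_mem_nhds htc] with s hs using if_pos (le_of_lt hs)
  · have hle : HasDerivWithinAt (fun s => if s ≤ t then u s else v s) (deriv u t) (Iic t) t :=
      (hu t).hasDerivAt.hasDerivWithinAt.congr (fun s hs => if_pos hs) (if_pos le_rfl)
    have hge : HasDerivWithinAt (fun s => if s ≤ t then u s else v s) (deriv u t) (Ici t) t := by
      refine huv' ▸ (hv t).hasDerivAt.hasDerivWithinAt.congr (fun s hs => ?_) (by simp [huv])
      rcases eq_or_lt_of_le (mem_Ici.mp hs) with rfl | hts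
      · simp [huv]
      · exact if_neg (not_le.mpr hts)
    rw [if_pos le_rfl, ← hasDerivWithinAt_univ, ← Iic_union_Ici]
    exact hle.union hge
  · rw [if_neg (not_le.mpr htc)]
    refine (hv t).hasDerivAt.congr_of_eventuallyEq ?_
    filter_upwards [Ioi_mem_nhds htc] with s hs using if_neg (not_le.mpr hs)

theorem contDiff_one_ite_le {u v : ℝ → E} (hu : ContDiff ℝ 1 u) (hv : ContDiff ℝ 1 v) {c : ℝ}
    (huv : u c = v c) (huv' : deriv u c = deriv v c) :
    ContDiff ℝ 1 (fun s => if s ≤ c then u s else v s) := by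
  have hd := hasDerivAt_ite_le (hu.differentiable one_ne_zero) (hv.differentiable one_ne_zero)
    huv huv'
  rw [contDiff_one_iff_deriv, funext fun t => (hd t).deriv]
  exact ⟨fun t => (hd t).differentiableAt, (hu.continuous_deriv le_rfl).if_le
    (hv.continuous_deriv le_rfl) continuous_id continuous_const fun t ht => ht ▸ huv'⟩

noncomputable def weightedLength (w : E → ℝ) (γ : ℝ → E) : ℝ :=
  ∫ t in (0 : ℝ)..1, w (γ t) * ‖deriv γ t‖

def weightedLengths (w : E → ℝ) (a b : E) : Set ℝ :=
  {l | ∃ γ : ℝ → E, ContDiff ℝ 1 γ ∧ γ 0 = a ∧ γ 1 = b ∧ l = weightedLength w γ}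

noncomputable def weightedPathDist (w : E → ℝ) (a b : E) : ℝ :=
  sInf (weightedLengths w a b)

variable {w : E → ℝ}

theorem weightedLength_nonneg (hw : 0 ≤ w) (γ : ℝ → E) : 0 ≤ weightedLength w γ :=
  integral_nonneg zero_le_one fun _ _ => mul_nonneg (hw _) (norm_nonneg _)

theorem weightedLengths_nonempty (w : E → ℝ) (a b : E) : (weightedLengths w a b).Nonempty :=
  ⟨_, fun t => a + t • (b - a), by fun_prop, by simp, by simp, rfl⟩

theorem bddBelow_weightedLengths (hw : 0 ≤ w) (a b : E) : BddBelow (weightedLengths w a b) := by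
  refine ⟨0, ?_⟩
  rintro l ⟨γ, -, -, -, rfl⟩
  exact weightedLength_nonneg hw γ

theorem weightedLength_comp_one_sub (w : E → ℝ) (γ : ℝ → E) :
    weightedLength w (fun t => γ (1 - t)) = weightedLength w γ := by
  simp only [weightedLength, deriv_comp_const_sub, norm_neg]
  simpa using integral_comp_sub_left (fun s => w (γ s) * ‖deriv γ s‖) (1 : ℝ) (a := 0) (b := 1)

theorem weightedLengths_comm (w : E → ℝ) (a b : E) :
    weightedLengths w a b = weightedLengths w b a := by
  suffices ∀ a b : E, weightedLengths w a b ⊆ weightedLengths w b a from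
    (this a b).antisymm (this b a)
  rintro a b l ⟨γ, hγ, rfl, rfl, rfl⟩
  exact ⟨fun t => γ (1 - t), hγ.comp (contDiff_const.sub contDiff_id), by simp, by simp,
    (weightedLength_comp_one_sub w γ).symm⟩

theorem weightedPathDist_comm (w : E → ℝ) (a b : E) :
    weightedPathDist w a b = weightedPathDist w b a :=
  congrArg sInf (weightedLengths_comm w a b)

theorem weightedPathDist_self (hw : 0 ≤ w) (a : E) : weightedPathDist w a a = 0 := by
  have hconst : (0 : ℝ) ∈ weightedLengths w a a :=
    ⟨fun _ => a, contDiff_const, rfl, rfl, by simp [weightedLength]⟩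
  refine le_antisymm (csInf_le (bddBelow_weightedLengths hw a a) hconst) ?_
  refine le_csInf (weightedLengths_nonempty w a a) ?_
  rintro l ⟨γ, -, -, -, rfl⟩
  exact weightedLength_nonneg hw γ

def smoothstep (s : ℝ) : ℝ := 3 * s ^ 2 - 2 * s ^ 3

theorem hasDerivAt_smoothstep (s : ℝ) : HasDerivAt smoothstep (6 * s * (1 - s)) s := by
  refine (((hasDerivAt_pow 2 s).const_mul 3).sub ((hasDerivAt_pow 3 s).const_mul 2)).congr_deriv ?_
  ring

@[simp] theorem smoothstep_zero : smoothstep 0 = 0 := by norm_num [smoothstep]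

@[simp] theorem smoothstep_one : smoothstep 1 = 1 := by norm_num [smoothstep]

theorem contDiff_smoothstep : ContDiff ℝ 1 smoothstep := by
  unfold smoothstep; fun_prop

theorem contDiff_comp_smoothstep {γ : ℝ → E} (hγ : ContDiff ℝ 1 γ) :
    ContDiff ℝ 1 (γ ∘ smoothstep) :=
  hγ.comp contDiff_smoothstep

theorem deriv_comp_smoothstep {γ : ℝ → E} (hγ : Differentiable ℝ γ) (s : ℝ) :
    deriv (γ ∘ smoothstep) s = (6 * s * (1 - s)) • deriv γ (smoothstep s) := by
  rw [deriv.scomp s (hγ _) (hasDerivAt_smoothstep s).differentiableAt,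
    (hasDerivAt_smoothstep s).deriv]

theorem weightedLength_comp_smoothstep (hw : Continuous w) {γ : ℝ → E} (hγ : ContDiff ℝ 1 γ) :
    weightedLength w (γ ∘ smoothstep) = weightedLength w γ := by
  have h := integral_mul_norm_deriv_comp hw hγ contDiff_smoothstep zero_le_one fun s hs => by
    rw [(hasDerivAt_smoothstep s).deriv]
    exact mul_nonneg (by linarith [hs.1]) (by linarith [hs.2])
  norm_num [smoothstep] at h
  exact h

noncomputable def joinPaths (γ₁ γ₂ : ℝ → E) (t : ℝ) : E :=
  if t ≤ 1 / 2 then γ₁ (2 * t) else γ₂ (2 * t - 1)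

variable {γ₁ γ₂ : ℝ → E}

theorem deriv_joinPaths_pieces_eq (h' : deriv γ₁ 1 = deriv γ₂ 0) :
    deriv (fun s => γ₁ (2 * s)) (1 / 2) = deriv (fun s => γ₂ (2 * s - 1)) (1 / 2) := by
  rw [deriv_comp_mul_left, deriv_comp_mul_left 2 (fun r => γ₂ (r - 1)), deriv_comp_sub_const]
  norm_num [h']

theorem hasDerivAt_joinPaths (h₁ : Differentiable ℝ γ₁) (h₂ : Differentiable ℝ γ₂)
    (h : γ₁ 1 = γ₂ 0) (h' : deriv γ₁ 1 = deriv γ₂ 0) (t : ℝ) :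
    HasDerivAt (joinPaths γ₁ γ₂) (if t ≤ 1 / 2 then deriv (fun s => γ₁ (2 * s)) t
      else deriv (fun s => γ₂ (2 * s - 1)) t) t :=
  hasDerivAt_ite_le (by fun_prop) (by fun_prop) (by norm_num [h]) (deriv_joinPaths_pieces_eq h') t

theorem contDiff_joinPaths (h₁ : ContDiff ℝ 1 γ₁) (h₂ : ContDiff ℝ 1 γ₂) (h : γ₁ 1 = γ₂ 0)
    (h' : deriv γ₁ 1 = deriv γ₂ 0) : ContDiff ℝ 1 (joinPaths γ₁ γ₂) :=
  contDiff_one_ite_le (h₁.comp (by fun_prop)) (h₂.comp (by fun_prop)) (by norm_num [h])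
    (deriv_joinPaths_pieces_eq h')

theorem weightedLength_joinPaths (hw : Continuous w) (h₁ : ContDiff ℝ 1 γ₁)
    (h₂ : ContDiff ℝ 1 γ₂) (h : γ₁ 1 = γ₂ 0) (h' : deriv γ₁ 1 = deriv γ₂ 0) :
    weightedLength w (joinPaths γ₁ γ₂) = weightedLength w γ₁ + weightedLength w γ₂ := by
  set δ := joinPaths γ₁ γ₂
  have hδ : ContDiff ℝ 1 δ := contDiff_joinPaths h₁ h₂ h h'
  have hderiv (t : ℝ) := (hasDerivAt_joinPaths (h₁.differentiable one_ne_zero)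
    (h₂.differentiable one_ne_zero) h h' t).deriv
  have hint : IntervalIntegrable (fun t => w (δ t) * ‖deriv δ t‖) MeasureTheory.volume 0 1 :=
    ((hw.comp hδ.continuous).mul (hδ.continuous_deriv le_rfl).norm).intervalIntegrable _ _
  have hleft : ∫ t in (0 : ℝ)..1 / 2, w (δ t) * ‖deriv δ t‖ = weightedLength w γ₁ := calc
    _ = ∫ t in (0 : ℝ)..1 / 2, w (γ₁ (2 * t)) * ‖deriv (fun s => γ₁ (2 * s)) t‖ := by
      refine integral_congr fun t ht => ?_
      have ht : t ≤ 1 / 2 := (uIcc_of_le (by norm_num : (0 : ℝ) ≤ 1 / 2) ▸ ht).2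
      simp only [δ, joinPaths, hderiv, if_pos ht]
    _ = ∫ s in 2 * 0..2 * (1 / 2), w (γ₁ s) * ‖deriv γ₁ s‖ :=
      integral_mul_norm_deriv_comp hw h₁ (ψ := fun t => 2 * t) (by fun_prop) (by norm_num)
        fun t _ => by simp
    _ = weightedLength w γ₁ := by norm_num [weightedLength]
  have hright : ∫ t in (1 / 2 : ℝ)..1, w (δ t) * ‖deriv δ t‖ = weightedLength w γ₂ := calc
    _ = ∫ t in (1 / 2 : ℝ)..1, w (γ₂ (2 * t - 1)) * ‖deriv (fun s => γ₂ (2 * s - 1)) t‖ := by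
      refine integral_congr_ae (Filter.Eventually.of_forall fun t ht => ?_)
      have ht : ¬t ≤ 1 / 2 := not_le.mpr (uIoc_of_le (by norm_num : (1 / 2 : ℝ) ≤ 1) ▸ ht).1
      simp only [δ, joinPaths, hderiv, if_neg ht]
    _ = ∫ s in 2 * (1 / 2) - 1..2 * 1 - 1, w (γ₂ s) * ‖deriv γ₂ s‖ :=
      integral_mul_norm_deriv_comp hw h₂ (ψ := fun t => 2 * t - 1) (by fun_prop) (by norm_num)
        fun t _ => by simp
    _ = weightedLength w γ₂ := by norm_num [weightedLength]
  rw [weightedLength, ← integral_add_adjacent_intervals (b := 1 / 2) (hint.mono_set ?_)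
    (hint.mono_set ?_), hleft, hright]
  all_goals rw [uIcc_of_le (by norm_num), uIcc_of_le (by norm_num)]
  exacts [Icc_subset_Icc_right (by norm_num), Icc_subset_Icc_left (by norm_num)]

open scoped Pointwise in
theorem weightedLengths_add_subset (hw : Continuous w) (a b c : E) :
    weightedLengths w a b + weightedLengths w b c ⊆ weightedLengths w a c := by
  rintro _ ⟨_, ⟨γ₁, h₁, rfl, rfl, rfl⟩, _, ⟨γ₂, h₂, h₂₀, rfl, rfl⟩, rfl⟩
  have hd₁ := h₁.differentiable one_ne_zero
  have hd₂ := h₂.differentiable one_ne_zero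
  have hmeet : (γ₁ ∘ smoothstep) 1 = (γ₂ ∘ smoothstep) 0 := by simp [h₂₀]
  have hmeet' : deriv (γ₁ ∘ smoothstep) 1 = deriv (γ₂ ∘ smoothstep) 0 := by
    simp [deriv_comp_smoothstep hd₁, deriv_comp_smoothstep hd₂]
  refine ⟨joinPaths (γ₁ ∘ smoothstep) (γ₂ ∘ smoothstep),
    contDiff_joinPaths (contDiff_comp_smoothstep h₁) (contDiff_comp_smoothstep h₂) hmeet hmeet',
    by norm_num [joinPaths], by norm_num [joinPaths], ?_⟩
  rw [weightedLength_joinPaths hw (contDiff_comp_smoothstep h₁) (contDiff_comp_smoothstep h₂)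
    hmeet hmeet', weightedLength_comp_smoothstep hw h₁, weightedLength_comp_smoothstep hw h₂]

theorem weightedPathDist_triangle (hw₀ : 0 ≤ w) (hw : Continuous w) (a b c : E) :
    weightedPathDist w a c ≤ weightedPathDist w a b + weightedPathDist w b c := by
  unfold weightedPathDist
  rw [← csInf_add (weightedLengths_nonempty w a b) (bddBelow_weightedLengths hw₀ a b)
    (weightedLengths_nonempty w b c) (bddBelow_weightedLengths hw₀ b c)]
  exact csInf_le_csInf (bddBelow_weightedLengths hw₀ a c)
    ((weightedLengths_nonempty w a b).add (weightedLengths_nonempty w b c))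
    (weightedLengths_add_subset hw a b c)

end WeightedLength

section EntireFunction

open Filter Topology

variable {f : ℂ → ℂ}

theorem fPathDist_eq_weightedPathDist (f : ℂ → ℂ) :
    fPathDist f = weightedPathDist fun z => ‖deriv f z‖ := rfl

theorem norm_sub_le_weightedLength (hf : Differentiable ℂ f) {γ : ℝ → ℂ} (hγ : ContDiff ℝ 1 γ)
    {t : ℝ} (ht : t ∈ Icc (0 : ℝ) 1) :
    ‖f (γ t) - f (γ 0)‖ ≤ weightedLength (fun z => ‖deriv f z‖) γ := by
  have hF : Continuous fun s => deriv f (γ s) * deriv γ s :=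
    (((hf.contDiff (n := 1)).continuous_deriv le_rfl).comp hγ.continuous).mul
      (hγ.continuous_deriv le_rfl)
  have hFTC : ∫ s in (0 : ℝ)..t, deriv f (γ s) * deriv γ s = f (γ t) - f (γ 0) :=
    integral_eq_sub_of_hasDerivAt
      (fun s _ => (hf (γ s)).hasDerivAt.comp s (hγ.differentiable one_ne_zero s).hasDerivAt)
      (hF.intervalIntegrable _ _)
  calc ‖f (γ t) - f (γ 0)‖ = ‖∫ s in (0 : ℝ)..t, deriv f (γ s) * deriv γ s‖ := by rw [hFTC]
    _ ≤ ∫ s in (0 : ℝ)..t, ‖deriv f (γ s) * deriv γ s‖ := norm_integral_le_integral_norm ht.1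
    _ ≤ ∫ s in (0 : ℝ)..1, ‖deriv f (γ s) * deriv γ s‖ :=
      integral_mono_interval le_rfl ht.1 ht.2 (Eventually.of_forall fun _ => norm_nonneg _)
        (hF.norm.intervalIntegrable _ _)
    _ = weightedLength (fun z => ‖deriv f z‖) γ := by simp only [weightedLength, norm_mul]

theorem Differentiable.eventually_apply_ne_apply (hf : Differentiable ℂ f)
    (hnc : ¬∃ c : ℂ, ∀ w : ℂ, f w = c) (a : ℂ) : ∀ᶠ z in 𝓝[≠] a, f z ≠ f a := by
  refine ((hf.analyticAt a).eventually_eq_or_eventually_ne analyticAt_const).resolve_left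
    fun h => hnc ⟨f a, fun w => ?_⟩
  have hf' : AnalyticOnNhd ℂ f univ := fun z _ => hf.analyticAt z
  exact hf'.eqOn_of_preconnected_of_eventuallyEq (fun _ _ => analyticAt_const)
    isPreconnected_univ (mem_univ a) h (mem_univ w)

theorem exists_pos_le_norm_sub_on_sphere (hf : Differentiable ℂ f)
    (hnc : ¬∃ c : ℂ, ∀ w : ℂ, f w = c) (a : ℂ) {ρ : ℝ} (hρ : 0 < ρ) :
    ∃ r ∈ Ioo 0 ρ, ∃ m > 0, ∀ z ∈ Metric.sphere a r, m ≤ ‖f z - f a‖ := by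
  obtain ⟨ε, hε, hball⟩ := Metric.eventually_nhds_iff.mp
    (eventually_nhdsWithin_iff.mp (hf.eventually_apply_ne_apply hnc a))
  obtain ⟨r, hr₀, hrε, hrρ⟩ : ∃ r, 0 < r ∧ r < ε ∧ r < ρ :=
    ⟨min ε ρ / 2, by positivity, by linarith [min_le_left ε ρ], by linarith [min_le_right ε ρ]⟩
  obtain ⟨m, hm, hmr⟩ := (isCompact_sphere a r).exists_forall_le'
    (hf.continuous.sub continuous_const).norm.continuousOn (a := 0) fun z hz =>
      norm_pos_iff.mpr <| sub_ne_zero.mpr <|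
        hball (hz.trans_lt hrε) (Metric.ne_of_mem_sphere hz hr₀.ne')
  exact ⟨r, ⟨hr₀, hrρ⟩, m, hm, hmr⟩

theorem fPathDist_pos (hf : Differentiable ℂ f) (hnc : ¬∃ c : ℂ, ∀ w : ℂ, f w = c) {a b : ℂ}
    (hab : a ≠ b) : 0 < fPathDist f a b := by
  obtain ⟨r, hr, m, hm, hmr⟩ := exists_pos_le_norm_sub_on_sphere hf hnc a (dist_pos.mpr hab.symm)
  rw [fPathDist_eq_weightedPathDist]
  refine hm.trans_le (le_csInf (weightedLengths_nonempty _ a b) ?_)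
  rintro _ ⟨γ, hγ, rfl, rfl, rfl⟩
  obtain ⟨t, ht, htr⟩ := intermediate_value_Icc zero_le_one
    (hγ.continuous.dist continuous_const).continuousOn ⟨by simpa using hr.1.le, hr.2.le⟩
  exact (hmr _ htr).trans (norm_sub_le_weightedLength hf hγ ht)

end EntireFunction

/-- For a non-constant entire function `f`, the `f`-path distance
`d_f` is a metric on `ℂ`: it is symmetric, vanishes exactly on the diagonal, and
satisfies the triangle inequality. -/
theorem fPathDist_is_metric (f : ℂ → ℂ) (hf : Differentiable ℂ f)
    (hnc : ¬∃ c : ℂ, ∀ w : ℂ, f w = c) :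
    ∀ a b c : ℂ,
      fPathDist f a b = fPathDist f b a ∧
      (fPathDist f a b = 0 ↔ a = b) ∧
      fPathDist f a c ≤ fPathDist f a b + fPathDist f b c := by
  intro a b c
  have hw₀ : 0 ≤ fun z => ‖deriv f z‖ := fun z => norm_nonneg _
  have hw : Continuous fun z => ‖deriv f z‖ :=
    ((hf.contDiff (n := 1)).continuous_deriv le_rfl).norm
  simp only [fPathDist_eq_weightedPathDist]
  refine ⟨weightedPathDist_comm _ a b, ⟨fun h => ?_, ?_⟩, weightedPathDist_triangle hw₀ hw a b c⟩
  · by_contra hab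
    exact (fPathDist_pos hf hnc hab).ne' h
  · rintro rfl
    exact weightedPathDist_self hw₀ a
end

section
/- For all w, z ∈ ℂ with exp(z) ≠ 1, the infinite product below converges (is multipliable) and the following identity holds, which is the explicit Weierstrass factorization of exp(w) − exp(z) over the Aut(exp)-orbit {z + 2πin : n ∈ ℤ} of z: exp(w) − exp(z) = (1 − exp(z)) · (1 − w/z) · exp( w/z + w/2 − (w/2)·(exp(z) + 1)/(exp(z) − 1) ) · ∏_{n=1}^∞ (1 − (z² − (z − w)²)/(z² + 4π²n²)) · exp( 2zw/(z² + 4π²n²) ). -/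
/-
Euler's sine product at `u / (2πi)` gives `e^u - 1 = u e^{u/2} ∏_{n ≥ 1} (1 + u² / (4π²n²))` for
every `u`. Applied to `u = w - z` and `u = z` it turns `(e^w - e^z) / (1 - e^z)` into
`(1 - w/z) e^{w/2}` times the quotient of the two products, and that quotient is, factor by factor,
the rational part of the Weierstrass factors. The convergence factors `exp (2zw / (z² + 4π²n²))`
multiply to `exp (w ((e^z + 1) / (2(e^z - 1)) - 1/z))` by the Mittag-Leffler expansion of the
cotangent at `z / (2πi)`, and together with the prefactor's exponential this is exactly `e^{w/2}`.
-/

open Complex Real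

lemma one_sub_sq_sub_sq_div_sq_add {K : Type*} [Field K] {z w q : K} (hq : q ≠ 0)
    (hzq : z ^ 2 + q ≠ 0) :
    1 - (z ^ 2 - (z - w) ^ 2) / (z ^ 2 + q) = (1 + (w - z) ^ 2 / q) / (1 + z ^ 2 / q) := by
  rw [add_comm (z ^ 2)] at hzq ⊢
  field_simp
  ring

namespace Complex

lemma div_two_pi_I_mem_integerComplement {z : ℂ} (hz : exp z ≠ 1) :
    z / (2 * π * I) ∈ integerComplement := by
  rintro ⟨n, hn⟩
  exact hz (exp_eq_one_iff.2 ⟨n, by rw [hn, div_mul_cancel₀ _ two_pi_I_ne_zero]⟩)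

lemma sineTerm_div_two_pi_I (u : ℂ) (n : ℕ) :
    sineTerm (u / (2 * π * I)) n = u ^ 2 / (4 * π ^ 2 * (n + 1) ^ 2) := by
  simp only [sineTerm, div_pow, mul_pow, I_sq]
  field_simp
  ring

lemma sq_add_four_pi_sq_mul_ne_zero {z : ℂ} (hz : exp z ≠ 1) (n : ℕ) :
    z ^ 2 + 4 * π ^ 2 * (n + 1) ^ 2 ≠ 0 := by
  intro h
  apply integerComplement_pow_two_ne_pow_two (div_two_pi_I_mem_integerComplement hz) (n + 1)
  rw [div_pow, mul_pow, mul_pow, I_sq, div_eq_iff (by simp [Real.pi_ne_zero])]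
  push_cast
  linear_combination h

lemma pi_mul_mul_tprod_sineTerm (x : ℂ) :
    π * x * ∏' n, (1 + sineTerm x n) = sin (π * x) :=
  tendsto_nhds_unique ((multipliable_sineTerm x).hasProd.tendsto_prod_nat.const_mul _)
    (by simpa only [sineTerm, neg_div, ← sub_eq_add_neg] using tendsto_euler_sin_prod x)

/-- Euler's product for `sinh (u / 2) / (u / 2)`. -/
noncomputable def sinhHalfProd (u : ℂ) : ℂ :=
  ∏' n : ℕ, (1 + u ^ 2 / (4 * π ^ 2 * (n + 1) ^ 2))

lemma hasProd_sinhHalfProd (u : ℂ) :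
    HasProd (fun n : ℕ => 1 + u ^ 2 / (4 * π ^ 2 * (n + 1) ^ 2)) (sinhHalfProd u) := by
  simpa only [sineTerm_div_two_pi_I, sinhHalfProd] using
    (multipliable_sineTerm (u / (2 * π * I))).hasProd

lemma exp_sub_one_eq_mul_sinhHalfProd (u : ℂ) :
    exp u - 1 = u * exp (u / 2) * sinhHalfProd u := by
  have h : π * (u / (2 * π * I)) * sinhHalfProd u = sin (π * (u / (2 * π * I))) := by
    simpa only [sineTerm_div_two_pi_I, sinhHalfProd] using
      pi_mul_mul_tprod_sineTerm (u / (2 * π * I))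
  rw [show (π : ℂ) * (u / (2 * π * I)) = -(u / 2) * I by field_simp; ring_nf; simp [I_sq],
    sin_mul_I, sinh_neg] at h
  have hsinh : u * sinhHalfProd u = 2 * sinh (u / 2) := by
    linear_combination (2 * I) * h + (u * sinhHalfProd u - 2 * sinh (u / 2)) * I_sq
  rw [mul_assoc, mul_left_comm, hsinh, sinh, mul_div_cancel₀ _ two_ne_zero, mul_sub,
    ← exp_add, ← exp_add, add_halves, add_neg_cancel, exp_zero]

lemma sinhHalfProd_ne_zero {z : ℂ} (hz : exp z ≠ 1) : sinhHalfProd z ≠ 0 := by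
  intro h
  apply sub_ne_zero.2 hz
  rw [exp_sub_one_eq_mul_sinhHalfProd, h, mul_zero]

lemma exp_sub_exp_eq_mul_sinhHalfProd (w z : ℂ) :
    exp w - exp z = (w - z) * exp ((w + z) / 2) * sinhHalfProd (w - z) := by
  have h := congrArg (exp z * ·) (exp_sub_one_eq_mul_sinhHalfProd (w - z))
  simp only [mul_sub, ← exp_add, mul_one, add_sub_cancel] at h
  rw [h, show (w + z) / 2 = z + (w - z) / 2 by ring, exp_add]
  ring

lemma hasSum_two_mul_div_sq_add {z : ℂ} (hz : exp z ≠ 1) :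
    HasSum (fun n : ℕ => 2 * z / (z ^ 2 + 4 * π ^ 2 * (n + 1) ^ 2))
      ((exp z + 1) / (2 * (exp z - 1)) - 1 / z) := by
  have hx := div_two_pi_I_mem_integerComplement hz
  have hcot := (summable_cotTerm hx).hasSum_iff_tendsto_nat.mpr
    (tendsto_logDeriv_euler_cot_sub hx)
  have hz0 : z ≠ 0 := by rintro rfl; simp at hz
  have hterm : ∀ n : ℕ, cotTerm (z / (2 * π * I)) n / (2 * π * I) =
      2 * z / (z ^ 2 + 4 * π ^ 2 * (n + 1) ^ 2) := by
    intro n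
    rw [cotTerm_identity hx]
    field_simp
    congr 1
    linear_combination (-4 * π ^ 2 * (n + 1) ^ 2) * I_sq
  have hval : (π * cot (π * (z / (2 * π * I))) - 1 / (z / (2 * π * I))) / (2 * π * I) =
      (exp z + 1) / (2 * (exp z - 1)) - 1 / z := by
    rw [cot_pi_eq_exp_ratio, mul_div_cancel₀ _ two_pi_I_ne_zero]
    have hz' : 1 - exp z ≠ 0 := sub_ne_zero.2 (Ne.symm hz)
    field_simp
    linear_combination (-(1 - exp z) * (exp z + 1) * z) * I_sq
  simpa only [hterm, hval] using hcot.div_const (2 * π * I)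

lemma hasProd_weierstrass_factor (w : ℂ) {z : ℂ} (hz : exp z ≠ 1) :
    HasProd (fun n : ℕ =>
      (1 - (z ^ 2 - (z - w) ^ 2) / (z ^ 2 + 4 * π ^ 2 * (n + 1) ^ 2)) *
        exp (2 * z * w / (z ^ 2 + 4 * π ^ 2 * (n + 1) ^ 2)))
      (sinhHalfProd (w - z) / sinhHalfProd z *
        exp (w * ((exp z + 1) / (2 * (exp z - 1)) - 1 / z))) := by
  refine (((hasProd_sinhHalfProd (w - z)).div₀ (hasProd_sinhHalfProd z)
    (sinhHalfProd_ne_zero hz)).mul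
    ((hasSum_two_mul_div_sq_add hz).mul_left w).cexp).congr_fun fun n => ?_
  have hq : 4 * (π : ℂ) ^ 2 * (n + 1) ^ 2 ≠ 0 := by
    simp [Real.pi_ne_zero, Nat.cast_add_one_ne_zero]
  rw [one_sub_sq_sub_sq_div_sq_add hq (sq_add_four_pi_sq_mul_ne_zero hz n), Function.comp_apply]
  congr 2
  ring

end Complex

/-- The explicit Weierstrass factorization of `exp w - exp z` over the
`Aut(exp)`-orbit `{z + 2πin : n ∈ ℤ}` of `z`, valid whenever `exp z ≠ 1`: the infinite
product over `n ≥ 1` converges and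
`e^w - e^z = (1 - e^z)(1 - w/z)·exp(w/z + w/2 - (w/2)(e^z+1)/(e^z-1))· ∏_{n=1}^∞ (1 - (z² - (z-w)²)/(z² + 4π²n²))·exp(2zw/(z² + 4π²n²))`. -/
theorem exp_sub_exp_weierstrass_product (w z : ℂ) (hz : Complex.exp z ≠ 1) :
    Multipliable (fun n : ℕ =>
      (1 - (z ^ 2 - (z - w) ^ 2) / (z ^ 2 + 4 * (Real.pi : ℂ) ^ 2 * ((n : ℂ) + 1) ^ 2)) *
        Complex.exp (2 * z * w / (z ^ 2 + 4 * (Real.pi : ℂ) ^ 2 * ((n : ℂ) + 1) ^ 2))) ∧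
    Complex.exp w - Complex.exp z =
      (1 - Complex.exp z) * (1 - w / z) *
        Complex.exp (w / z + w / 2 -
          (w / 2) * ((Complex.exp z + 1) / (Complex.exp z - 1))) *
        ∏' n : ℕ,
          (1 - (z ^ 2 - (z - w) ^ 2) / (z ^ 2 + 4 * (Real.pi : ℂ) ^ 2 * ((n : ℂ) + 1) ^ 2)) *
            Complex.exp (2 * z * w / (z ^ 2 + 4 * (Real.pi : ℂ) ^ 2 * ((n : ℂ) + 1) ^ 2)) := by
  have hz0 : z ≠ 0 := by rintro rfl; simp at hz
  have hprod := hasProd_weierstrass_factor w hz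
  have hB := sinhHalfProd_ne_zero hz
  refine ⟨hprod.multipliable, ?_⟩
  set E := w / z + w / 2 - w / 2 * ((cexp z + 1) / (cexp z - 1))
  set S := (cexp z + 1) / (2 * (cexp z - 1)) - 1 / z
  have hES : (w + z) / 2 = z / 2 + (E + w * S) := by
    simp only [E, S]
    field_simp
    ring
  rw [hprod.tprod_eq, exp_sub_exp_eq_mul_sinhHalfProd, hES, Complex.exp_add, Complex.exp_add,
    show 1 - cexp z = -(z * cexp (z / 2) * sinhHalfProd z) by
      linear_combination -exp_sub_one_eq_mul_sinhHalfProd z]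
  field_simp
  ring
end
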